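/- Let H be a Hopf algebra over a field k, let e : H → H ⊗ H be the quantum V-bein e(h) = Σ S(h₍₁₎) ⊗ h₍₂₎, and let A : H → H ⊗ H be the gauge field A(h) = Σ S(h₍₁₎) ⊗ h₍₂₎ − ε(h) 1 ⊗ 1. Then A has zero torsion with respect to e: for every v ∈ ker ε, d(e(v)) + Σ A(v₍₁₎) ∧ e(v₍₂₎) − A(v) ∧ (1 ⊗ 1) = 0 in H ⊗ H ⊗ H. -/

import Mathlib

/-!
Writing `e(h) = Σ S(h₍₁₎) ⊗ h₍₂₎`, the wedge `Σ e(v₍₁₎) ∧ e(v₍₂₎) = Σ S(v₍₁₎) ⊗ v₍₂₎S(v₍₃₎) ⊗ v₍₄₎`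
collapses, by coassociativity and the antipode axiom `Σ h₍₁₎S(h₍₂₎) = ε(h)1`, to
`Σ S(v₍₁₎) ⊗ 1 ⊗ v₍₂₎`, while the counit part of `A` contributes `-1 ⊗ e(v)` by counitality.
For `ε(v) = 0` we have `A(v) = e(v)`, so `A(v) ∧ (1 ⊗ 1) = Σ S(v₍₁₎) ⊗ v₍₂₎ ⊗ 1`, and these three
terms cancel the three terms of `d(e(v))`.
-/

open TensorProduct

noncomputable section

variable {k H : Type*} [Field k] [Ring H] [HopfAlgebra k H]

/-- The exterior differential on universal 1-forms:
`d(a ⊗ b) = 1 ⊗ a ⊗ b − a ⊗ 1 ⊗ b + a ⊗ b ⊗ 1`. -/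
noncomputable def dOne : H ⊗[k] H →ₗ[k] H ⊗[k] (H ⊗[k] H) :=
  TensorProduct.mk k H (H ⊗[k] H) 1
    - LinearMap.lTensor H (TensorProduct.mk k H H 1)
    + LinearMap.lTensor H ((TensorProduct.mk k H H).flip 1)

/-- The wedge product of universal 1-forms: `(a ⊗ b) ∧ (c ⊗ d) = a ⊗ bc ⊗ d`. -/
noncomputable def wedge :
    (H ⊗[k] H) ⊗[k] (H ⊗[k] H) →ₗ[k] H ⊗[k] (H ⊗[k] H) :=
  LinearMap.lTensor H
      ((LinearMap.mul' k H).rTensor H ∘ₗ (TensorProduct.assoc k H H H).symm.toLinearMap)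
    ∘ₗ (TensorProduct.assoc k H H (H ⊗[k] H)).toLinearMap

/-- The quantum `V`-bein `e(h) = Σ S(h₍₁₎) ⊗ h₍₂₎`. -/
noncomputable def vbein : H →ₗ[k] H ⊗[k] H :=
  (HopfAlgebra.antipode (R := k) (A := H)).rTensor H ∘ₗ Coalgebra.comul

/-- The gauge field `A(h) = Σ S(h₍₁₎) ⊗ h₍₂₎ − ε(h) 1 ⊗ 1`. -/
noncomputable def gaugeA : H →ₗ[k] H ⊗[k] H :=
  vbein - (Coalgebra.counit (R := k) (A := H)).smulRight ((1 : H) ⊗ₜ[k] (1 : H))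

open Coalgebra

-- `b ⊗ c ↦ Σ b S(c₍₁₎) ⊗ c₍₂₎`
def leftMulVbein : H ⊗[k] H →ₗ[k] H ⊗[k] H :=
  (LinearMap.mul' k H).rTensor H ∘ₗ (TensorProduct.assoc k H H H).symm.toLinearMap
    ∘ₗ (vbein (k := k)).lTensor H

lemma leftMulVbein_comp_comul :
    leftMulVbein ∘ₗ comul = TensorProduct.mk k H H 1 := by
  ext h
  have hcoassoc : (TensorProduct.assoc k H H H).symm (((HopfAlgebra.antipode k).rTensor H).lTensor H
      ((comul (R := k)).lTensor H (comul h)))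
      = ((HopfAlgebra.antipode k).lTensor H).rTensor H ((comul (R := k)).rTensor H (comul h)) := by
    rw [← coassoc_symm_apply]
    exact (LinearMap.congr_fun
      (LinearMap.rTensor_lTensor_comp_assoc_symm (x := HopfAlgebra.antipode k)) _).symm
  have hantipode : (LinearMap.mul' k H).rTensor H (((HopfAlgebra.antipode k).lTensor H).rTensor H
      ((comul (R := k)).rTensor H (comul h)))
      = (Algebra.linearMap k H ∘ₗ counit).rTensor H (comul h) := by
    rw [← HopfAlgebra.mul_antipode_lTensor_comul, LinearMap.rTensor_comp_apply,
      LinearMap.rTensor_comp_apply]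
  simp only [leftMulVbein, vbein, LinearMap.comp_apply, LinearMap.lTensor_comp_apply,
    LinearEquiv.coe_coe, hcoassoc, hantipode, LinearMap.rTensor_comp_apply, rTensor_counit_comul,
    LinearMap.rTensor_tmul, Algebra.linearMap_apply, map_one, TensorProduct.mk_apply]

lemma wedge_map_vbein_vbein (x : H ⊗[k] H) :
    wedge (TensorProduct.map vbein vbein x)
      = TensorProduct.map (HopfAlgebra.antipode k) leftMulVbein
          (TensorProduct.assoc k H H H (comul.rTensor H x)) := by
  induction x using TensorProduct.induction_on with
  | zero => simp
  | add x y hx hy => simp only [map_add, hx, hy]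
  | tmul a b =>
    rw [TensorProduct.map_tmul, LinearMap.rTensor_tmul, vbein, LinearMap.comp_apply]
    induction comul (R := k) a using TensorProduct.induction_on with
    | zero => simp
    | add y z hy hz => simp only [map_add, TensorProduct.add_tmul, hy, hz]
    | tmul c d => rfl

lemma wedge_map_vbein_vbein_comul (h : H) :
    wedge (TensorProduct.map vbein vbein (comul h))
      = (TensorProduct.mk k H H 1).lTensor H (vbein h) := by
  rw [wedge_map_vbein_vbein, coassoc_apply, ← LinearMap.comp_apply (TensorProduct.map _ _),
    LinearMap.map_comp_lTensor, leftMulVbein_comp_comul, ← LinearMap.lTensor_comp_rTensor]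
  rfl

lemma wedge_one_one_tmul (z : H ⊗[k] H) :
    wedge (((1 : H) ⊗ₜ[k] (1 : H)) ⊗ₜ[k] z) = (1 : H) ⊗ₜ[k] z := by
  induction z using TensorProduct.induction_on with
  | zero => simp
  | add y z hy hz => simp only [TensorProduct.tmul_add, map_add, hy, hz]
  | tmul c d => simp [wedge]

lemma wedge_tmul_one_one (x : H ⊗[k] H) :
    wedge (x ⊗ₜ[k] ((1 : H) ⊗ₜ[k] (1 : H))) = ((TensorProduct.mk k H H).flip 1).lTensor H x := by
  induction x using TensorProduct.induction_on with
  | zero => simp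
  | add x y hx hy => simp only [TensorProduct.add_tmul, map_add, hx, hy]
  | tmul a b => simp [wedge]

lemma map_smulRight_counit_comul {M N : Type*} [AddCommGroup M] [Module k M] [AddCommGroup N]
    [Module k N] (u : M) (f : H →ₗ[k] N) (h : H) :
    TensorProduct.map ((counit (R := k) (A := H)).smulRight u) f (comul h) = u ⊗ₜ[k] f h := by
  have hu : (counit (R := k) (A := H)).smulRight u = LinearMap.toSpanSingleton k M u ∘ₗ counit :=
    rfl
  rw [hu, ← LinearMap.map_rTensor, rTensor_counit_comul, TensorProduct.map_tmul,
    LinearMap.toSpanSingleton_apply, one_smul]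

lemma gaugeA_apply (h : H) : gaugeA (k := k) h = vbein h - counit (R := k) h • (1 ⊗ₜ[k] 1) := rfl

lemma wedge_map_gaugeA_vbein_comul (h : H) :
    wedge (TensorProduct.map gaugeA vbein (comul h))
      = (TensorProduct.mk k H H 1).lTensor H (vbein h) - (1 : H) ⊗ₜ[k] vbein h := by
  rw [gaugeA, ← LinearMap.lTensor_comp_rTensor, LinearMap.rTensor_sub, LinearMap.comp_sub,
    LinearMap.lTensor_comp_rTensor, LinearMap.lTensor_comp_rTensor, LinearMap.sub_apply, map_sub,
    wedge_map_vbein_vbein_comul, map_smulRight_counit_comul, wedge_one_one_tmul]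

/-- the gauge field `A` has zero torsion with respect to the quantum `V`-bein
`e`: for every `v ∈ ker ε`, `d(e(v)) + Σ A(v₍₁₎) ∧ e(v₍₂₎) − A(v) ∧ (1 ⊗ 1) = 0`. -/
theorem statement7 :
    ∀ v : H, Coalgebra.counit (R := k) v = 0 →
      dOne (vbein (k := k) (H := H) v)
          + wedge ((TensorProduct.map gaugeA vbein) (Coalgebra.comul (R := k) v))
          - wedge ((gaugeA (k := k) (H := H) v) ⊗ₜ[k] ((1 : H) ⊗ₜ[k] (1 : H)))
        = 0 := by
  intro v hv
  have hA : gaugeA (k := k) v = vbein v := by rw [gaugeA_apply, hv, zero_smul, sub_zero]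
  rw [wedge_map_gaugeA_vbein_comul, hA, wedge_tmul_one_one]
  simp only [dOne, LinearMap.add_apply, LinearMap.sub_apply, TensorProduct.mk_apply]
  abel
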